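/- Let X̃ = S(1,…,1,2) ⊆ P^{2n} be the smooth rational normal scroll of type (1,…,1,2) (n−1 ones and one 2) with n ≥ 2, and let p ∈ P^{2n} \ X̃ be a closed point. Then dim Σ_p(X̃) ≥ 1. -/

import Mathlib

/-!
Common framework: projective space over an algebraically closed field, linear
subspaces, Zariski closure, tangent spaces, secant cones and secant loci,
rational normal scrolls (possibly cones) and their distinguished subvarieties.
-/

open Projectivization MvPolynomial

noncomputable section

namespace SecantLoci

/-- Projective `N`-space over `K`, with homogeneous coordinates indexed by `Fin (N+1)`. -/
abbrev PS (K : Type*) [Field K] (N : ℕ) := Projectivization K (Fin (N + 1) → K)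

variable {K : Type*} [Field K] {N : ℕ}

/-- The affine cone over a set of projective points (it contains `0`). -/
def cone (S : Set (PS K N)) : Set (Fin (N + 1) → K) :=
  { v | ∀ hv : v ≠ 0, Projectivization.mk K v hv ∈ S }

/-- The set of projective points lying in the projectivization of a linear subspace `W`. -/
def linSet (W : Submodule K (Fin (N + 1) → K)) : Set (PS K N) :=
  { x | x.submodule ≤ W }

/-- `S` is a projective linear subspace of (projective) dimension `d`. -/
def IsLinearOfDim (S : Set (PS K N)) (d : ℕ) : Prop :=
  ∃ W : Submodule K (Fin (N + 1) → K), Module.finrank K W = d + 1 ∧ S = linSet W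

/-- The projective linear span of a set of projective points. -/
def projSpan (S : Set (PS K N)) : Set (PS K N) :=
  linSet (⨆ x ∈ S, x.submodule)

/-- The line through two points (the span of the pair). -/
def lineThrough (p q : PS K N) : Set (PS K N) := projSpan {p, q}

def IsLine (S : Set (PS K N)) : Prop := IsLinearOfDim S 1

def IsPlane (S : Set (PS K N)) : Prop := IsLinearOfDim S 2

/-- The polynomials vanishing on the affine cone over `S`. -/
def vanishing (S : Set (PS K N)) : Set (MvPolynomial (Fin (N + 1)) K) :=
  { f | ∀ v ∈ cone S, eval v f = 0 }

/-- The Zariski closure of a set of projective points. -/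
def zcl (S : Set (PS K N)) : Set (PS K N) :=
  { x | ∀ f ∈ vanishing S, eval x.rep f = 0 }

def IsZClosed (S : Set (PS K N)) : Prop := zcl S = S

/-- Irreducibility with respect to Zariski closed sets. -/
def IsIrred (S : Set (PS K N)) : Prop :=
  S.Nonempty ∧ ∀ A B : Set (PS K N),
    IsZClosed A → IsZClosed B → S ⊆ A ∪ B → S ⊆ A ∨ S ⊆ B

/-- `dimGE S k` : the (Zariski) dimension of `S` is at least `k`, i.e. there is a
strictly increasing chain of `k+1` nonempty irreducible closed subsets of the closure of `S`. -/
def dimGE (S : Set (PS K N)) (k : ℕ) : Prop :=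
  ∃ c : Fin (k + 1) → Set (PS K N), StrictMono c ∧
    (∀ i, IsZClosed (c i) ∧ IsIrred (c i)) ∧ c (Fin.last k) ⊆ zcl S

/-- The embedded join of two sets: the Zariski closure of the union of all lines
joining a point of `Y` to a point of `Z` (together with `Y` and `Z` themselves). -/
def join (Y Z : Set (PS K N)) : Set (PS K N) :=
  zcl (Y ∪ Z ∪ ⋃ y ∈ Y, ⋃ z ∈ Z, lineThrough y z)

/-- The (projective) Zariski tangent space of `X` at `q`: the projectivization of the
kernel of the linear parts at `q` of all polynomials vanishing on the cone over `X`. -/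
def tangentSpace (X : Set (PS K N)) (q : PS K N) : Set (PS K N) :=
  { x | ∀ f ∈ vanishing X, ∑ i, x.rep i * eval q.rep (pderiv i f) = 0 }

/-- A line `L` is a secant line of `X` when it meets `X` in a scheme of length at least 2:
equivalently, it meets `X` in two distinct points, or it is tangent to `X` at some point. -/
def IsSecantLine (X L : Set (PS K N)) : Prop :=
  IsLine L ∧
    ((∃ x ∈ X ∩ L, ∃ y ∈ X ∩ L, x ≠ y) ∨ ∃ q ∈ X ∩ L, L ⊆ tangentSpace X q)

/-- The secant cone `Sec_p(X)`: the union of all secant lines of `X` through `p`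
(just `{p}` if there is no such line). -/
def secCone (X : Set (PS K N)) (p : PS K N) : Set (PS K N) :=
  {p} ∪ ⋃ L ∈ { L | IsSecantLine X L ∧ p ∈ L }, L

/-- The secant locus `Σ_p(X)` (as a set: the support of the scheme-theoretic
intersection of `X` with the secant cone). -/
def secLocus (X : Set (PS K N)) (p : PS K N) : Set (PS K N) :=
  X ∩ secCone X p

/-- The secant variety: the Zariski closure of the union of all chords of `X`. -/
def secVariety (X : Set (PS K N)) : Set (PS K N) :=
  zcl (⋃ x ∈ X, ⋃ y ∈ X, ⋃ _ : x ≠ y, lineThrough x y)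

/-- The tangent variety: the Zariski closure of the union of all tangent spaces of `X`. -/
def tanVariety (X : Set (PS K N)) : Set (PS K N) :=
  zcl (⋃ q ∈ X, tangentSpace X q)

/-- `S` is a smooth plane conic: the image of `ℙ¹` under a degree-2 Veronese map into
the plane spanned by three linearly independent vectors. -/
def IsSmoothConic (S : Set (PS K N)) : Prop :=
  ∃ v : Fin 3 → (Fin (N + 1) → K), LinearIndependent K v ∧
    S = { x | ∃ s t : K, (s, t) ≠ (0, 0) ∧
      x.submodule = Submodule.span K {s ^ 2 • v 0 + (s * t) • v 1 + t ^ 2 • v 2} }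

/-- `S` is a smooth quadric surface (in the 3-space spanned by four independent vectors):
the image of `ℙ¹ × ℙ¹` under a Segre map. -/
def IsSmoothQuadricSurface (S : Set (PS K N)) : Prop :=
  ∃ v : Fin 2 → Fin 2 → (Fin (N + 1) → K),
    LinearIndependent K (fun q : Fin 2 × Fin 2 => v q.1 q.2) ∧
    S = { x | ∃ b c : Fin 2 → K, b ≠ 0 ∧ c ≠ 0 ∧
      x.submodule = Submodule.span K {∑ i, ∑ j, (b i * c j) • v i j} }

/-- The data of a smooth rational normal scroll of type `(a 0, …, a (n-1))` in `ℙ^N`: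
a family of linearly independent vectors `v i j`, `0 ≤ j ≤ a i`, giving the rational
normal curve directrices of the scroll. -/
structure ScrollData (K : Type*) [Field K] (N n : ℕ) (a : Fin n → ℕ) where
  v : (i : Fin n) → Fin (a i + 1) → (Fin (N + 1) → K)
  indep : LinearIndependent K fun q : (i : Fin n) × Fin (a i + 1) => v q.1 q.2

namespace ScrollData

variable {n : ℕ} {a : Fin n → ℕ}

/-- The point of the `i`-th directrix curve over the parameter `(s : t) ∈ ℙ¹`. -/
def w (D : ScrollData K N n a) (i : Fin n) (s t : K) : Fin (N + 1) → K :=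
  ∑ j : Fin (a i + 1), (s ^ (a i - (j : ℕ)) * t ^ (j : ℕ)) • D.v i j

/-- The ruling of the scroll over the parameter `(s : t) ∈ ℙ¹`:
the linear span of the points of the directrix curves over `(s : t)`. -/
def ruling (D : ScrollData K N n a) (s t : K) : Set (PS K N) :=
  linSet (Submodule.span K (Set.range fun i => D.w i s t))

/-- The scroll itself: the union of its rulings. -/
def carrier (D : ScrollData K N n a) : Set (PS K N) :=
  ⋃ (s : K) (t : K) (_ : (s, t) ≠ (0, 0)), D.ruling s t

/-- A line section of the scroll: a line contained in the scroll meeting each ruling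
in exactly one point (a section of the scroll map `φ`). -/
def IsLineSection (D : ScrollData K N n a) (L : Set (PS K N)) : Prop :=
  IsLine L ∧ L ⊆ D.carrier ∧
    ∀ s t : K, (s, t) ≠ (0, 0) → ∃! x, x ∈ L ∩ D.ruling s t

/-- The subscroll `S(1̲)` swept out by the line sections, i.e. the subscroll
corresponding to the indices with `a i = 1`. -/
def sub1 (D : ScrollData K N n a) : Set (PS K N) :=
  ⋃ (s : K) (t : K) (_ : (s, t) ≠ (0, 0)),
    linSet (Submodule.span K
      (Set.range fun i : { i : Fin n // a i = 1 } => D.w i.1 s t))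

/-- The subscroll `S(2̲)` corresponding to the indices with `a i = 2`. -/
def sub2 (D : ScrollData K N n a) : Set (PS K N) :=
  ⋃ (s : K) (t : K) (_ : (s, t) ≠ (0, 0)),
    linSet (Submodule.span K
      (Set.range fun i : { i : Fin n // a i = 2 } => D.w i.1 s t))

/-- The Segre variety `Δ = ⋃_β ⟨C_β⟩ ≅ ℙ² × ℙ^{m-k-1}`: the union of the planes of
the conic sections `C_β` of the subscroll `S(2̲)`. -/
def delta (D : ScrollData K N n a) : Set (PS K N) :=
  ⋃ (β : { i : Fin n // a i = 2 } → K) (_ : β ≠ 0),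
    linSet (Submodule.span K (Set.range fun j : Fin 3 =>
      ∑ i : { i : Fin n // a i = 2 }, β i •
        D.v i.1 ⟨(j : ℕ), by have h1 := i.2; have h2 := j.isLt; omega⟩))

end ScrollData

/-- The data of a (possibly singular) rational normal scroll in `ℙ^N` with vertex of
projective dimension `hv - 1` (empty vertex when `hv = 0`, i.e. a smooth scroll):
a cone over the smooth rational normal scroll `base`, with vertex spanned by the
vectors `zv`, the whole configuration being linearly independent and spanning `ℙ^N`. -/
structure ConeScroll (K : Type*) [Field K] (N n : ℕ) (a : Fin n → ℕ) (hv : ℕ) where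
  zv : Fin hv → (Fin (N + 1) → K)
  base : ScrollData K N n a
  indep : LinearIndependent K
    (Sum.elim zv fun q : (i : Fin n) × Fin (a i + 1) => base.v q.1 q.2)
  total : N + 1 = hv + ∑ i, (a i + 1)

namespace ConeScroll

variable {n hv : ℕ} {a : Fin n → ℕ}

/-- The vertex `Vert(X̃)` of the cone. -/
def vertex (C : ConeScroll K N n a hv) : Set (PS K N) :=
  linSet (Submodule.span K (Set.range C.zv))

/-- The linear span `⟨X̃₀⟩` of the smooth base scroll. -/
def baseSpan (C : ConeScroll K N n a hv) : Set (PS K N) :=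
  projSpan C.base.carrier

/-- The scroll `X̃ = Join(Vert(X̃), X̃₀)` itself. -/
def carrier (C : ConeScroll K N n a hv) : Set (PS K N) :=
  join C.vertex C.base.carrier

/-- `Σ_p(X̃) = 2·Vert(X̃)`: the secant locus is (set-theoretically) the vertex,
with double structure. -/
def SLempty (C : ConeScroll K N n a hv) (p : PS K N) : Prop :=
  secLocus C.carrier p = C.vertex

/-- `Σ_p(X̃) = Join(Vert(X̃), {x, y})` for two distinct points `x, y` of `⟨X̃₀⟩`. -/
def SLpair (C : ConeScroll K N n a hv) (p : PS K N) : Prop :=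
  ∃ x y : PS K N, x ∈ C.baseSpan ∧ y ∈ C.baseSpan ∧ x ≠ y ∧
    secLocus C.carrier p = join C.vertex {x, y}

/-- `Σ_p(X̃) = 2⟨Vert(X̃), x⟩` for a point `x` of a line `L ⊆ ⟨X̃₀⟩`. -/
def SLdouble (C : ConeScroll K N n a hv) (p : PS K N) : Prop :=
  ∃ L : Set (PS K N), IsLine L ∧ L ⊆ C.baseSpan ∧ ∃ x ∈ L,
    secLocus C.carrier p = projSpan (C.vertex ∪ {x})

/-- `Σ_p(X̃) = Join(Vert(X̃), L ∪ L')` for two distinct coplanar lines `L, L' ⊆ ⟨X̃₀⟩`. -/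
def SLlines (C : ConeScroll K N n a hv) (p : PS K N) : Prop :=
  ∃ L L' : Set (PS K N), IsLine L ∧ IsLine L' ∧ L ≠ L' ∧
    (∃ Pl : Set (PS K N), IsPlane Pl ∧ L ⊆ Pl ∧ L' ⊆ Pl) ∧
    L ⊆ C.baseSpan ∧ L' ⊆ C.baseSpan ∧
    secLocus C.carrier p = join C.vertex (L ∪ L')

/-- `Σ_p(X̃) = Join(Vert(X̃), V)` for a smooth plane conic `V ⊆ ⟨X̃₀⟩`. -/
def SLconic (C : ConeScroll K N n a hv) (p : PS K N) : Prop :=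
  ∃ V : Set (PS K N), IsSmoothConic V ∧ V ⊆ C.baseSpan ∧
    secLocus C.carrier p = join C.vertex V

/-- `Σ_p(X̃) = Join(Vert(X̃), W)` for a smooth quadric surface `W ⊆ ⟨X̃₀⟩`. -/
def SLquadric (C : ConeScroll K N n a hv) (p : PS K N) : Prop :=
  ∃ W : Set (PS K N), IsSmoothQuadricSurface W ∧ W ⊆ C.baseSpan ∧
    secLocus C.carrier p = join C.vertex W

end ConeScroll

/-- The homogeneous vanishing ideal of a set of projective points. -/
def vanishingIdeal (S : Set (PS K N)) : Ideal (MvPolynomial (Fin (N + 1)) K) where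
  carrier := vanishing S
  add_mem' := by
    intro f g hf hg v hv
    simp [map_add, hf v hv, hg v hv]
  zero_mem' := by intro v hv; simp
  smul_mem' := by
    intro c f hf v hv
    simp [smul_eq_mul, hf v hv]

/-- `rs` is a regular sequence on `R/I` (expressed without passing to the quotient):
the sequence stays proper modulo `I` and each entry is a nonzerodivisor modulo
`I` together with the previous entries. -/
def IsRegModulo {R : Type*} [CommRing R] (I : Ideal R) (rs : List R) : Prop :=
  (I ⊔ Ideal.span { x | x ∈ rs } ≠ ⊤) ∧
  ∀ (i : ℕ) (h : i < rs.length) (y : R),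
    rs.get ⟨i, h⟩ * y ∈ I ⊔ Ideal.span { x | x ∈ rs.take i } →
    y ∈ I ⊔ Ideal.span { x | x ∈ rs.take i }

/-- `S ⊆ ℙ^N` is arithmetically Cohen–Macaulay: its homogeneous coordinate ring
admits a regular sequence, inside the irrelevant maximal ideal, of length equal to
its Krull dimension. -/
def IsACM (S : Set (PS K N)) : Prop :=
  ∃ rs : List (MvPolynomial (Fin (N + 1)) K),
    (∀ f ∈ rs, f ∈ Ideal.span
      (Set.range (MvPolynomial.X : Fin (N + 1) → MvPolynomial (Fin (N + 1)) K))) ∧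
    IsRegModulo (vanishingIdeal S) rs ∧
    ((rs.length : ℕ∞) : WithBot ℕ∞) =
      ringKrullDim (MvPolynomial (Fin (N + 1)) K ⧸ vanishingIdeal S)

/-- The image of a subset of `ℙ^N` under the linear projection induced by a linear
map `T` on homogeneous coordinates. -/
def projImage {M : ℕ} (T : (Fin (N + 1) → K) →ₗ[K] (Fin (M + 1) → K))
    (X : Set (PS K N)) : Set (PS K M) :=
  { y | ∃ x ∈ X, y.submodule = Submodule.map T x.submodule }

end SecantLoci

/-!
Write `p = ∑ A i j • v i j` in the frame of the scroll and let `Aⱼ = A i₀ j` be its coordinates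
along the conic directrix. Solving the linear equations coefficientwise, for every `t` with
`Δ(t) = A₀ t² - 2 A₁ t + A₂ ≠ 0` the point `p` lies on a chord joining the ruling over `(1 : t)` to
the ruling over `(A₁ - A₀ t : A₂ - A₁ t)`, with endpoints polynomial in `t`; if all `Aⱼ` vanish,
the second ruling can be taken to be the one at infinity. Otherwise `Δ ≡ 0` forces
characteristic `2` and `(A₀ : A₁ : A₂) = (0 : 1 : 0)`, the strange point of the conic, through
which all its tangent lines pass; then `p` lies on a tangent line of the scroll at every point of
an explicit curve. In each case the endpoints on the rulings `(1 : t)` form a polynomial curve in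
`Σ_p`, meeting every ruling once; its Zariski closure is irreducible and strictly contains a point.
-/

namespace SecantLoci

open scoped Polynomial

section ZariskiClosure

variable {K : Type*} [Field K] {N : ℕ}

lemma algHom_apply_aeval {A : Type*} [CommRing A] [Algebra K A] (φ : A →ₐ[K] K)
    (g : Fin (N + 1) → A) (f : MvPolynomial (Fin (N + 1)) K) :
    φ (aeval g f) = eval (fun i => φ (g i)) f := by
  rw [← AlgHom.comp_apply, comp_aeval, aeval_eq_eval]

lemma zero_mem_cone (S : Set (PS K N)) : (0 : Fin (N + 1) → K) ∈ cone S :=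
  fun h => absurd rfl h

lemma smul_mem_cone {S : Set (PS K N)} {v : Fin (N + 1) → K} (c : K) (hv : v ∈ cone S) :
    c • v ∈ cone S := by
  intro hcv
  have hv0 : v ≠ 0 := by rintro rfl; exact hcv (smul_zero c)
  have hc : c ≠ 0 := by rintro rfl; exact hcv (zero_smul K v)
  rw [show mk K (c • v) hcv = mk K v hv0 from (mk_eq_mk_iff _ _ _ _ _).2 ⟨Units.mk0 c hc, rfl⟩]
  exact hv hv0

lemma mem_cone_of_mk_mem {S : Set (PS K N)} {v : Fin (N + 1) → K} (hv : v ≠ 0)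
    (h : mk K v hv ∈ S) : v ∈ cone S :=
  fun _ => h

lemma rep_mem_cone {S : Set (PS K N)} {x : PS K N} (hx : x ∈ S) : x.rep ∈ cone S :=
  mem_cone_of_mk_mem x.rep_nonzero (by rwa [mk_rep])

lemma subset_zcl (S : Set (PS K N)) : S ⊆ zcl S :=
  fun _ hx _ hf => hf _ (rep_mem_cone hx)

lemma zcl_subset_zcl_of_vanishing {S B : Set (PS K N)} (h : vanishing B ⊆ vanishing S) :
    zcl S ⊆ zcl B :=
  fun _ hx f hf => hx f (h hf)

lemma zcl_mono {S T : Set (PS K N)} (h : S ⊆ T) : zcl S ⊆ zcl T :=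
  zcl_subset_zcl_of_vanishing fun _ hf v hv => hf v fun h0 => h (hv h0)

lemma vanishing_subset_vanishing_zcl (S : Set (PS K N)) :
    vanishing S ⊆ vanishing (zcl S) := by
  intro f hf v hv
  by_cases h0 : v = 0
  · exact h0 ▸ hf 0 (zero_mem_cone S)
  obtain ⟨c, hc⟩ := exists_smul_eq_mk_rep K v h0
  -- `f (c⁻¹ • ·)` vanishes on the cone over `S`, hence at `(mk v).rep = c • v`
  set g := aeval (fun i => C ((c⁻¹ : Kˣ) : K) * X i) f
  have hg : ∀ w, eval w g = eval (((c⁻¹ : Kˣ) : K) • w) f := fun w => by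
    change aeval w g = _
    rw [algHom_apply_aeval]
    simp [Pi.smul_def]
  have := hv h0 g fun w hw => by rw [hg]; exact hf _ (smul_mem_cone _ hw)
  rwa [hg, ← hc, Units.smul_def, smul_smul, Units.inv_mul, one_smul] at this

lemma isZClosed_zcl (S : Set (PS K N)) : IsZClosed (zcl S) :=
  (zcl_subset_zcl_of_vanishing (vanishing_subset_vanishing_zcl S)).antisymm (subset_zcl _)

lemma zcl_singleton (x : PS K N) : zcl ({x} : Set (PS K N)) = {x} := by
  refine Set.Subset.antisymm (fun y hy => ?_) (subset_zcl _)
  set u := x.rep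
  -- the linear forms `u k • X j - u j • X k` cut out the point `x`
  have key : ∀ j k, y.rep j * u k = y.rep k * u j := fun j k => by
    have := hy (C (u k) * X j - C (u j) * X k) fun v hv => by
      by_cases h0 : v = 0
      · simp [h0]
      obtain ⟨c, hc⟩ := (mk_eq_mk_iff' K v u h0 x.rep_nonzero).1 (by rw [mk_rep]; exact hv h0)
      simp [← hc]
      ring
    simp only [map_sub, eval_mul, eval_C, eval_X] at this
    linear_combination this
  obtain ⟨k, hk⟩ : ∃ k, u k ≠ 0 := Function.ne_iff.1 x.rep_nonzero
  have hy' : (y.rep k * (u k)⁻¹) • u = y.rep := funext fun j => by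
    simp only [Pi.smul_apply, smul_eq_mul]
    field_simp
    linear_combination (key j k).symm
  rw [Set.mem_singleton_iff, ← mk_rep y, ← mk_rep x, mk_eq_mk_iff' K _ _ y.rep_nonzero]
  exact ⟨_, hy'⟩

lemma isIrred_singleton (x : PS K N) : IsIrred ({x} : Set (PS K N)) :=
  ⟨⟨x, rfl⟩, fun _ _ _ _ h => (h rfl).imp Set.singleton_subset_iff.2 Set.singleton_subset_iff.2⟩

end ZariskiClosure

section PolynomialCurve

variable {K : Type*} [Field K] {N : ℕ}

def curvePoint (Γ : Fin (N + 1) → K[X]) (t : K) : Fin (N + 1) → K :=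
  fun k => (Γ k).eval t

def curveImage (Γ : Fin (N + 1) → K[X]) (G : Set K) : Set (PS K N) :=
  {x | ∃ t ∈ G, ∃ h : curvePoint Γ t ≠ 0, mk K (curvePoint Γ t) h = x}

lemma eval_curvePoint (Γ : Fin (N + 1) → K[X]) (t : K) (f : MvPolynomial (Fin (N + 1)) K) :
    eval (curvePoint Γ t) f = (aeval Γ f).eval t := by
  rw [← Polynomial.coe_aeval_eq_eval, algHom_apply_aeval]
  rfl

lemma curvePoint_C_mul (Γ : Fin (N + 1) → K[X]) (c t : K) :
    curvePoint (fun k => Polynomial.C c * Γ k) t = c • curvePoint Γ t := by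
  ext k
  simp [curvePoint]

lemma zcl_curveImage_subset {Γ : Fin (N + 1) → K[X]} (G : Set K) {B : Set (PS K N)}
    (hB : IsZClosed B) (hinf : {t | curvePoint Γ t ∈ cone B}.Infinite) :
    zcl (curveImage Γ G) ⊆ B := by
  rw [← hB]
  refine zcl_subset_zcl_of_vanishing fun f hf v hv => ?_
  by_cases h0 : v = 0
  · exact h0 ▸ hf 0 (zero_mem_cone B)
  obtain ⟨t₀, -, ht₀, hmk⟩ := hv h0
  obtain ⟨c, hc⟩ := (mk_eq_mk_iff' K _ _ h0 ht₀).1 hmk.symm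
  -- `t ↦ f (c • Γ t)` is a polynomial with infinitely many roots
  have hzero : aeval (fun k => Polynomial.C c * Γ k) f = 0 :=
    Polynomial.eq_zero_of_infinite_isRoot _ <| hinf.mono fun t ht => by
      rw [Set.mem_ofPred_eq, Polynomial.IsRoot.def, ← eval_curvePoint, curvePoint_C_mul]
      exact hf _ (smul_mem_cone c ht)
  rw [← hc, ← curvePoint_C_mul, eval_curvePoint, hzero, Polynomial.eval_zero]

lemma isIrred_zcl_curveImage {Γ : Fin (N + 1) → K[X]} {G : Set K} (hG : G.Infinite)
    (hne : (curveImage Γ G).Nonempty) : IsIrred (zcl (curveImage Γ G)) := by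
  refine ⟨hne.mono (subset_zcl _), fun A B hA hB hAB => ?_⟩
  have hcover : G ⊆ {t | curvePoint Γ t ∈ cone A} ∪ {t | curvePoint Γ t ∈ cone B} :=
    fun t ht => by
      by_cases h0 : curvePoint Γ t = 0
      · exact Or.inl (show curvePoint Γ t ∈ cone A from h0 ▸ zero_mem_cone A)
      · exact (hAB (subset_zcl _ ⟨t, ht, h0, rfl⟩)).imp (mem_cone_of_mk_mem h0)
          (mem_cone_of_mk_mem h0)
  exact ((Set.infinite_union.1 (hG.mono hcover)).imp (zcl_curveImage_subset G hA)
    (zcl_curveImage_subset G hB))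

/-- The chain is `{x} ⊊ zcl (curveImage Γ G)`. -/
lemma dimGE_one_of_curveImage_subset {Γ : Fin (N + 1) → K[X]} {G : Set K} {S : Set (PS K N)}
    (hG : G.Infinite) (hS : curveImage Γ G ⊆ S) {x y : PS K N}
    (hx : x ∈ curveImage Γ G) (hy : y ∈ curveImage Γ G) (hxy : x ≠ y) : dimGE S 1 := by
  refine ⟨![{x}, zcl (curveImage Γ G)], ?_, ?_, zcl_mono hS⟩
  · refine Fin.strictMono_iff_lt_succ.2 fun i => ?_
    fin_cases i
    show {x} ⊂ zcl (curveImage Γ G)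
    refine Set.ssubset_iff_subset_ne.2 ⟨Set.singleton_subset_iff.2 (subset_zcl _ hx), fun h => ?_⟩
    have : y ∈ ({x} : Set (PS K N)) := h ▸ subset_zcl _ hy
    exact hxy (Set.mem_singleton_iff.1 this).symm
  · intro i
    fin_cases i
    · exact ⟨zcl_singleton x, isIrred_singleton x⟩
    · exact ⟨isZClosed_zcl _, isIrred_zcl_curveImage hG ⟨x, hx⟩⟩

end PolynomialCurve

section SecantLines

variable {K : Type*} [Field K] {N : ℕ}

lemma mem_linSet_iff {W : Submodule K (Fin (N + 1) → K)} {x : PS K N} :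
    x ∈ linSet W ↔ x.rep ∈ W := by
  rw [linSet, Set.mem_ofPred_eq, submodule_eq, Submodule.span_singleton_le_iff_mem]

lemma mk_mem_linSet_iff {W : Submodule K (Fin (N + 1) → K)} {v : Fin (N + 1) → K} (hv : v ≠ 0) :
    mk K v hv ∈ linSet W ↔ v ∈ W := by
  rw [linSet, Set.mem_ofPred_eq, submodule_mk, Submodule.span_singleton_le_iff_mem]

lemma mem_linSet_sup_left {x y : PS K N} : x ∈ linSet (x.submodule ⊔ y.submodule) :=
  show x.submodule ≤ _ from le_sup_left

lemma mem_linSet_sup_right {x y : PS K N} : y ∈ linSet (x.submodule ⊔ y.submodule) :=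
  show y.submodule ≤ _ from le_sup_right

lemma isLine_linSet_sup {x y : PS K N} (hxy : x ≠ y) :
    IsLine (linSet (x.submodule ⊔ y.submodule)) := by
  have hli : LinearIndependent K ![x.rep, y.rep] := by
    have h := independent_iff.1 ((independent_pair_iff_ne x y).2 hxy)
    rwa [show Projectivization.rep ∘ ![x, y] = ![x.rep, y.rep] by ext i; fin_cases i <;> rfl] at h
  refine ⟨_, ?_, rfl⟩
  rw [submodule_eq, submodule_eq, ← Submodule.span_insert,
    ← Matrix.range_cons_cons_empty x.rep y.rep ![]]
  simp [finrank_span_eq_card hli]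

lemma derivative_aeval (Γ : Fin (N + 1) → K[X]) (f : MvPolynomial (Fin (N + 1)) K) :
    Polynomial.derivative (aeval Γ f) =
      ∑ i, aeval Γ (pderiv i f) * Polynomial.derivative (Γ i) := by
  induction f using MvPolynomial.induction_on with
  | C a => simp
  | add p q hp hq => simp only [map_add, hp, hq, add_mul, Finset.sum_add_distrib]
  | mul_X p i hp =>
    simp only [map_mul, aeval_X, Polynomial.derivative_mul, hp, Finset.sum_mul, Derivation.leibniz,
      pderiv_X, smul_eq_mul, map_add, add_mul, Finset.sum_add_distrib, Pi.single_apply,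
      apply_ite (aeval Γ), map_zero, mul_ite, ite_mul, mul_one, mul_zero, zero_mul,
      Finset.sum_ite_eq, Finset.mem_univ, if_true]
    rw [add_comm]
    exact congrArg₂ _ rfl (Finset.sum_congr rfl fun _ _ => by ring)

def tangentVectors (X : Set (PS K N)) (q : PS K N) : Submodule K (Fin (N + 1) → K) where
  carrier := {z | ∀ f ∈ vanishing X, ∑ i, z i * eval q.rep (pderiv i f) = 0}
  add_mem' hz hz' f hf := by simp [add_mul, Finset.sum_add_distrib, hz f hf, hz' f hf]
  zero_mem' := by simp
  smul_mem' c z hz f hf := by simp [mul_assoc, ← Finset.mul_sum, hz f hf]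

lemma mem_tangentSpace_iff {X : Set (PS K N)} {q x : PS K N} :
    x ∈ tangentSpace X q ↔ x.rep ∈ tangentVectors X q :=
  Iff.rfl

lemma mem_secLocus_of_secant {X : Set (PS K N)} {p x y : PS K N} (hx : x ∈ X) (hy : y ∈ X)
    (hxy : x ≠ y) (hp : p.submodule ≤ x.submodule ⊔ y.submodule) : x ∈ secLocus X p :=
  ⟨hx, Or.inr <| Set.mem_iUnion₂.2 ⟨_, ⟨⟨isLine_linSet_sup hxy,
    Or.inl ⟨x, ⟨hx, mem_linSet_sup_left⟩, y, ⟨hy, mem_linSet_sup_right⟩, hxy⟩⟩, hp⟩,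
    mem_linSet_sup_left⟩⟩

lemma mem_secLocus_of_tangent {X : Set (PS K N)} {p x : PS K N} (hx : x ∈ X) (hpX : p ∉ X)
    (hxT : x.rep ∈ tangentVectors X x) (hpT : p.rep ∈ tangentVectors X x) :
    x ∈ secLocus X p := by
  have hxp : x ≠ p := fun h => hpX (h ▸ hx)
  have hT : linSet (x.submodule ⊔ p.submodule) ⊆ tangentSpace X x := fun z hz =>
    mem_tangentSpace_iff.2 <| mem_linSet_iff.1 <|
      show z.submodule ≤ _ from le_trans hz (sup_le (mem_linSet_iff.2 hxT) (mem_linSet_iff.2 hpT))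
  exact ⟨hx, Or.inr <| Set.mem_iUnion₂.2 ⟨_, ⟨⟨isLine_linSet_sup hxp,
    Or.inr ⟨x, ⟨hx, mem_linSet_sup_left⟩, hT⟩⟩, mem_linSet_sup_right⟩, mem_linSet_sup_left⟩⟩

variable [Infinite K]

lemma velocity_mem_tangentVectors {X : Set (PS K N)} {q : PS K N} {Γ : Fin (N + 1) → K[X]}
    (hΓ : ∀ t, curvePoint Γ t ∈ cone X) (h0 : curvePoint Γ 0 = q.rep) :
    curvePoint (fun k => Polynomial.derivative (Γ k)) 0 ∈ tangentVectors X q := by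
  intro f hf
  have hzero : aeval Γ f = 0 :=
    Polynomial.funext fun t => by rw [← eval_curvePoint, Polynomial.eval_zero, hf _ (hΓ t)]
  have := congrArg (Polynomial.eval 0 ∘ Polynomial.derivative) hzero
  simp only [Function.comp_apply, derivative_aeval, Polynomial.eval_finsetSum,
    Polynomial.eval_mul, ← eval_curvePoint, h0, map_zero, Polynomial.eval_zero] at this
  simpa only [curvePoint, mul_comm] using this

lemma rep_mem_tangentVectors {X : Set (PS K N)} {q : PS K N} (hq : q ∈ X) :
    q.rep ∈ tangentVectors X q := by
  -- Euler's identity, as the velocity of the line `t ↦ (1 + t) • q.rep` in the cone over `X`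
  have hcurve : ∀ t, curvePoint (fun k => Polynomial.C (q.rep k) * (1 + Polynomial.X)) t
      = (1 + t) • q.rep := fun t => by
    ext k
    simp [curvePoint, mul_comm]
  have := velocity_mem_tangentVectors (fun t => hcurve t ▸ smul_mem_cone _ (rep_mem_cone hq))
    (by simpa using hcurve 0)
  convert this using 1
  ext k
  simp [curvePoint]

lemma mem_secLocus_of_velocity_eq {X : Set (PS K N)} {p : PS K N} {Γ : Fin (N + 1) → K[X]}
    (hΓ : ∀ t, curvePoint Γ t ∈ cone X) (h0 : curvePoint Γ 0 ≠ 0)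
    (hv : curvePoint (fun k => Polynomial.derivative (Γ k)) 0 = p.rep) (hpX : p ∉ X) :
    mk K _ h0 ∈ secLocus X p := by
  obtain ⟨c, hc⟩ := exists_smul_eq_mk_rep K _ h0
  have hpT := velocity_mem_tangentVectors (Γ := fun k => Polynomial.C (c : K) * Γ k)
    (fun t => curvePoint_C_mul Γ c t ▸ smul_mem_cone _ (hΓ t)) (by rw [curvePoint_C_mul, ← hc]; rfl)
  simp only [Polynomial.derivative_C_mul, curvePoint_C_mul, hv] at hpT
  have hx : mk K _ h0 ∈ X := hΓ 0 h0
  exact mem_secLocus_of_tangent hx hpX (rep_mem_tangentVectors hx)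
    ((Submodule.smul_mem_iff _ c.ne_zero).1 hpT)

end SecantLines

namespace ScrollData

variable {K : Type*} [Field K] {N n : ℕ} {a : Fin n → ℕ} (D : ScrollData K N n a)

/-- Coordinates are indexed by `ℕ`: the values `c i j` with `j > a i` are ignored. -/
def comb : (Fin n → ℕ → K) →ₗ[K] (Fin (N + 1) → K) where
  toFun c := ∑ q : (i : Fin n) × Fin (a i + 1), c q.1 q.2 • D.v q.1 q.2
  map_add' c c' := by simp only [Pi.add_apply, add_smul, Finset.sum_add_distrib]
  map_smul' r c := by simp only [Pi.smul_apply, smul_eq_mul, mul_smul, Finset.smul_sum,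
    RingHom.id_apply]

lemma comb_apply (c : Fin n → ℕ → K) :
    D.comb c = ∑ q : (i : Fin n) × Fin (a i + 1), c q.1 q.2 • D.v q.1 q.2 :=
  rfl

lemma comb_congr {c c' : Fin n → ℕ → K} (h : ∀ i j, j ≤ a i → c i j = c' i j) :
    D.comb c = D.comb c' :=
  Finset.sum_congr rfl fun q _ => by rw [h q.1 q.2 q.2.is_le]

lemma eq_of_comb_eq {c c' : Fin n → ℕ → K} (h : D.comb c = D.comb c') {i : Fin n} {j : ℕ}
    (hj : j ≤ a i) : c i j = c' i j :=
  Fintype.linearIndependent_iffₛ.1 D.indep (fun q => c q.1 q.2) (fun q => c' q.1 q.2) h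
    ⟨i, ⟨j, Nat.lt_succ_of_le hj⟩⟩

lemma exists_comb_eq (hN : ∑ i, (a i + 1) = N + 1) (x : Fin (N + 1) → K) :
    ∃ A, D.comb A = x := by
  have hspan := D.indep.span_eq_top_of_card_eq_finrank' (by simp [hN])
  obtain ⟨c, hc⟩ := (Submodule.mem_span_range_iff_exists_fun K).1
    (hspan ▸ Submodule.mem_top : x ∈ _)
  refine ⟨fun i j => if h : j < a i + 1 then c ⟨i, ⟨j, h⟩⟩ else 0, ?_⟩
  rw [comb_apply]
  simpa only [Fin.is_lt, dif_pos] using hc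

def rulingPoint (B : Fin n → K) (s t : K) : Fin (N + 1) → K :=
  ∑ i, B i • D.w i s t

lemma rulingPoint_eq_comb (B : Fin n → K) (s t : K) :
    D.rulingPoint B s t = D.comb fun i j => B i * (s ^ (a i - j) * t ^ j) := by
  simp only [rulingPoint, w, comb_apply, Finset.smul_sum, smul_smul, ← Finset.univ_sigma_univ,
    Finset.sum_sigma]

lemma smul_rulingPoint (c : K) (B : Fin n → K) (s t : K) :
    c • D.rulingPoint B s t = D.rulingPoint (c • B) s t := by
  simp only [rulingPoint, Finset.smul_sum, smul_smul, Pi.smul_apply, smul_eq_mul]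

lemma rulingPoint_mem_cone (B : Fin n → K) {s t : K} (hst : (s, t) ≠ (0, 0)) :
    D.rulingPoint B s t ∈ cone D.carrier := fun h =>
  Set.mem_iUnion₂.2 ⟨s, t, Set.mem_iUnion.2 ⟨hst, (mk_mem_linSet_iff h).2 <|
    Submodule.sum_mem _ fun i _ => Submodule.smul_mem _ _ (Submodule.subset_span ⟨i, rfl⟩)⟩⟩

lemma eq_zero_of_smul_rep_eq_rulingPoint {p : PS K N} (hp : p ∉ D.carrier) {c s t : K}
    (hst : (s, t) ≠ (0, 0)) {B : Fin n → K} (h : c • p.rep = D.rulingPoint B s t) : c = 0 := by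
  by_contra hc
  refine hp ?_
  have := D.rulingPoint_mem_cone (c⁻¹ • B) hst (by
    rw [← smul_rulingPoint, ← h, smul_smul, inv_mul_cancel₀ hc, one_smul]; exact p.rep_nonzero)
  simpa only [← smul_rulingPoint, ← h, smul_smul, inv_mul_cancel₀ hc, one_smul, mk_rep] using this

lemma rulingPoint_one_ne_zero {B : Fin n → K} {i : Fin n} (hB : B i ≠ 0) (t : K) :
    D.rulingPoint B 1 t ≠ 0 := by
  intro h
  rw [rulingPoint_eq_comb, ← map_zero D.comb] at h
  exact hB (by simpa using D.eq_of_comb_eq h (Nat.zero_le (a i)))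

/-- Rulings over distinct parameters `(1 : t) ≠ (u : v)` meet only in `0`. -/
lemma mk_rulingPoint_ne (hpos : ∀ i, 1 ≤ a i) {x y : Fin (N + 1) → K} (hx0 : x ≠ 0) (hy0 : y ≠ 0)
    {B B' : Fin n → K} {t u v : K} (hx : x = D.rulingPoint B 1 t)
    (hy : y = D.rulingPoint B' u v) (hδ : v - t * u ≠ 0) :
    Projectivization.mk K x hx0 ≠ Projectivization.mk K y hy0 := by
  intro hxy
  obtain ⟨c, hc⟩ := (mk_eq_mk_iff' K _ _ hx0 hy0).1 hxy
  refine hx0 (hx ▸ ?_)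
  suffices B = 0 by simp [this, rulingPoint]
  ext i
  have h : D.comb (fun i j => B i * (1 ^ (a i - j) * t ^ j)) =
      D.comb (fun i j => (c • B') i * (u ^ (a i - j) * v ^ j)) := by
    rw [← rulingPoint_eq_comb, ← rulingPoint_eq_comb, ← hx, ← smul_rulingPoint, ← hy, hc]
  have e₀ := D.eq_of_comb_eq h (Nat.zero_le (a i))
  have e₁ := D.eq_of_comb_eq h (hpos i)
  simp only [one_pow, pow_zero, pow_one, mul_one, one_mul, Nat.sub_zero] at e₀ e₁
  rw [show a i = a i - 1 + 1 by have := hpos i; omega, pow_succ] at e₀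
  have hb : (c • B') i * u ^ (a i - 1) * (v - t * u) = 0 := by linear_combination t * e₀ - e₁
  rw [Pi.zero_apply, e₀, ← mul_assoc, (mul_eq_zero.1 hb).resolve_right hδ, zero_mul]

def combCurve (c : Fin n → ℕ → K[X]) : Fin (N + 1) → K[X] :=
  fun k => ∑ q : (i : Fin n) × Fin (a i + 1), c q.1 q.2 * Polynomial.C (D.v q.1 q.2 k)

lemma curvePoint_combCurve (c : Fin n → ℕ → K[X]) (t : K) :
    curvePoint (D.combCurve c) t = D.comb fun i j => (c i j).eval t := by
  ext k
  simp [curvePoint, combCurve, comb_apply, Polynomial.eval_finsetSum, Finset.sum_apply]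

lemma curvePoint_derivative_combCurve (c : Fin n → ℕ → K[X]) (t : K) :
    curvePoint (fun k => Polynomial.derivative (D.combCurve c k)) t =
      D.comb fun i j => (Polynomial.derivative (c i j)).eval t := by
  ext k
  simp [curvePoint, combCurve, comb_apply, Polynomial.eval_finsetSum, Finset.sum_apply]

lemma curvePoint_combCurve_mul_X_pow (B : Fin n → K[X]) (t : K) :
    curvePoint (D.combCurve fun i j => B i * Polynomial.X ^ j) t =
      D.rulingPoint (fun i => (B i).eval t) 1 t := by
  simp [curvePoint_combCurve, rulingPoint_eq_comb]

/-- The curve `t ↦ D.rulingPoint (B t) 1 t` meets each ruling once, so two parameters give two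
distinct points. -/
lemma dimGE_one_of_rulingPoint_mem_cone (hpos : ∀ i, 1 ≤ a i) {S : Set (PS K N)} {G : Set K}
    (hG : G.Infinite) (B : Fin n → K[X])
    (hne : ∀ t ∈ G, D.rulingPoint (fun i => (B i).eval t) 1 t ≠ 0)
    (hS : ∀ t ∈ G, D.rulingPoint (fun i => (B i).eval t) 1 t ∈ cone S) : dimGE S 1 := by
  set Γ := D.combCurve fun i j => B i * Polynomial.X ^ j
  have hΓ := D.curvePoint_combCurve_mul_X_pow B
  obtain ⟨t₀, ht₀, t₁, ht₁, hne₀₁⟩ := hG.nontrivial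
  have h₀ : curvePoint Γ t₀ ≠ 0 := hΓ t₀ ▸ hne t₀ ht₀
  have h₁ : curvePoint Γ t₁ ≠ 0 := hΓ t₁ ▸ hne t₁ ht₁
  refine dimGE_one_of_curveImage_subset hG ?_ ⟨t₀, ht₀, h₀, rfl⟩ ⟨t₁, ht₁, h₁, rfl⟩
    (D.mk_rulingPoint_ne hpos h₀ h₁ (hΓ t₀) (hΓ t₁) (by simpa [sub_eq_zero] using hne₀₁.symm))
  rintro _ ⟨t, ht, h, rfl⟩
  exact (hΓ t ▸ hS t ht) h

lemma rulingPoint_mem_cone_secLocus_of_smul_rep_eq_add (hpos : ∀ i, 1 ≤ a i) {p : PS K N}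
    (hp : p ∉ D.carrier) {c t u v : K} (hc : c ≠ 0) (hδ : v - t * u ≠ 0) {B B' : Fin n → K}
    (h : c • p.rep = D.rulingPoint B 1 t + D.rulingPoint B' u v) :
    D.rulingPoint B 1 t ≠ 0 ∧ D.rulingPoint B 1 t ∈ cone (secLocus D.carrier p) := by
  have huv : (u, v) ≠ (0, 0) := fun h0 => hδ (by simp_all)
  have hx0 : D.rulingPoint B 1 t ≠ 0 := fun h0 =>
    hc (D.eq_zero_of_smul_rep_eq_rulingPoint hp huv (by rw [h, h0, zero_add]))
  have hy0 : D.rulingPoint B' u v ≠ 0 := fun h0 =>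
    hc (D.eq_zero_of_smul_rep_eq_rulingPoint hp (show ((1 : K), t) ≠ (0, 0) by simp)
      (by rw [h, h0, add_zero]))
  refine ⟨hx0, fun _ => mem_secLocus_of_secant (D.rulingPoint_mem_cone B (by simp) hx0)
    (D.rulingPoint_mem_cone B' huv hy0) (D.mk_rulingPoint_ne hpos hx0 hy0 rfl rfl hδ) ?_⟩
  rw [submodule_eq, submodule_mk, submodule_mk, Submodule.span_singleton_le_iff_mem,
    ← inv_smul_smul₀ hc p.rep, h]
  exact Submodule.smul_mem _ _ (Submodule.add_mem_sup (Submodule.mem_span_singleton_self _)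
    (Submodule.mem_span_singleton_self _))

variable [Infinite K]

/-- `hPQ` says `Δ(t) • p = x(t) + y(t)` with `x(t) = D.rulingPoint (P t) 1 t` and
`y(t) = D.rulingPoint (Q t) (U t) (V t)`, where `Δ = V - X U` vanishes exactly when the two rulings
coincide. -/
lemma dimGE_secLocus_of_secant_family (hpos : ∀ i, 1 ≤ a i) {p : PS K N} (hp : p ∉ D.carrier)
    {A : Fin n → ℕ → K} (hA : D.comb A = p.rep) (U V : K[X]) (P Q : Fin n → K[X])
    (hΔ : V - Polynomial.X * U ≠ 0)
    (hPQ : ∀ i j, j ≤ a i → Polynomial.C (A i j) * (V - Polynomial.X * U) =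
      P i * Polynomial.X ^ j + Q i * U ^ (a i - j) * V ^ j) :
    dimGE (secLocus D.carrier p) 1 := by
  have hG : {t | (V - Polynomial.X * U).eval t ≠ 0}.Infinite :=
    (Polynomial.finite_setOfPred_isRoot hΔ).infinite_compl
  have key (t : K) (ht : (V - Polynomial.X * U).eval t ≠ 0) :=
    D.rulingPoint_mem_cone_secLocus_of_smul_rep_eq_add hpos hp (B := fun i => (P i).eval t)
      (B' := fun i => (Q i).eval t) ht (by simpa using ht) <| by
        rw [← hA, ← map_smul, rulingPoint_eq_comb, rulingPoint_eq_comb, ← map_add]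
        refine D.comb_congr fun i j hj => ?_
        have := congrArg (Polynomial.eval t) (hPQ i j hj)
        simp only [Polynomial.eval_mul, Polynomial.eval_C, Polynomial.eval_sub,
          Polynomial.eval_add, Polynomial.eval_pow, Polynomial.eval_X, Pi.add_apply, Pi.smul_apply,
          smul_eq_mul, one_pow, one_mul] at this ⊢
        linear_combination this
  exact D.dimGE_one_of_rulingPoint_mem_cone hpos hG P (fun t ht => (key t ht).1)
    fun t ht => (key t ht).2

/-- The curve `ε ↦ D.rulingPoint (b + ε α) 1 (t + ε)` has velocity `∑ α i w i + b i ∂ₜ w i` at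
`ε = 0`; when this is `p`, the tangent line at `D.rulingPoint b 1 t` passes through `p`. -/
lemma rulingPoint_mem_cone_secLocus_of_tangent {p : PS K N} (hp : p ∉ D.carrier)
    {A : Fin n → ℕ → K} (hA : D.comb A = p.rep) (b α : Fin n → K) (t : K)
    (hbα : ∀ i j, j ≤ a i → A i j = α i * t ^ j + j * b i * t ^ (j - 1)) :
    D.rulingPoint b 1 t ∈ cone (secLocus D.carrier p) := by
  set Γ := D.combCurve fun i j =>
    (Polynomial.C (b i) + Polynomial.C (α i) * Polynomial.X) * (Polynomial.C t + Polynomial.X) ^ j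
  have hΓ : ∀ ε, curvePoint Γ ε = D.rulingPoint (b + ε • α) 1 (t + ε) := fun ε => by
    rw [curvePoint_combCurve, rulingPoint_eq_comb]
    congr 1
    ext i j
    simp only [Polynomial.eval_mul, Polynomial.eval_add, Polynomial.eval_C, Polynomial.eval_pow,
      Polynomial.eval_X, Pi.add_apply, Pi.smul_apply, smul_eq_mul, one_pow, one_mul]
    ring
  have h0 : curvePoint Γ 0 = D.rulingPoint b 1 t := by simp [hΓ]
  have hv : curvePoint (fun k => Polynomial.derivative (Γ k)) 0 = p.rep := by
    rw [curvePoint_derivative_combCurve, ← hA]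
    refine D.comb_congr fun i j hj => ?_
    simp [hbα i j hj, Polynomial.derivative_pow]
    ring
  have hc : curvePoint Γ 0 ∈ cone (secLocus D.carrier p) := fun h =>
    mem_secLocus_of_velocity_eq (fun ε => hΓ ε ▸ D.rulingPoint_mem_cone _ (by simp)) h hv hp
  rwa [h0] at hc

end ScrollData

section TypeOneTwo

variable {K : Type*} [Field K] {N n : ℕ} {a : Fin n → ℕ} {i₀ : Fin n}

lemma one_le_of_eq_two_of_eq_one (h2 : a i₀ = 2) (h1 : ∀ i, i ≠ i₀ → a i = 1) (i : Fin n) :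
    1 ≤ a i := by
  by_cases hi : i = i₀
  · exact hi ▸ h2 ▸ one_le_two
  · exact (h1 i hi).ge

lemma sum_add_one_eq_of_eq_two_of_eq_one (h2 : a i₀ = 2) (h1 : ∀ i, i ≠ i₀ → a i = 1) :
    ∑ i, (a i + 1) = 2 * n + 1 := by
  rw [← Finset.add_sum_erase _ _ (Finset.mem_univ i₀), h2,
    Finset.sum_congr rfl fun i hi => by rw [h1 i (Finset.ne_of_mem_erase hi)]]
  simp only [Finset.sum_const, Finset.card_erase_of_mem (Finset.mem_univ i₀), Finset.card_univ,
    Fintype.card_fin, smul_eq_mul]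
  have := i₀.pos
  omega

namespace ScrollData

variable [Infinite K] (D : ScrollData K N n a) (h2 : a i₀ = 2) (h1 : ∀ i, i ≠ i₀ → a i = 1)
  {p : PS K N} (hp : p ∉ D.carrier) {A : Fin n → ℕ → K} (hA : D.comb A = p.rep)
include h2 h1 hp hA

/-- With `Aⱼ = A i₀ j`, the chord equations along the conic are solved by `Q i₀ = 1`,
`U = A₁ - A₀ X`, `V = A₂ - A₁ X`; then `V - X U = A₀ X² - 2 A₁ X + A₂`. -/
lemma dimGE_secLocus_of_conic_coords_nondegenerate
    (hΔ : ¬(A i₀ 0 = 0 ∧ 2 * A i₀ 1 = 0 ∧ A i₀ 2 = 0)) : dimGE (secLocus D.carrier p) 1 := by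
  set U := Polynomial.C (A i₀ 1) - Polynomial.C (A i₀ 0) * Polynomial.X
  set V := Polynomial.C (A i₀ 2) - Polynomial.C (A i₀ 1) * Polynomial.X
  refine D.dimGE_secLocus_of_secant_family (one_le_of_eq_two_of_eq_one h2 h1) hp hA U V
    (fun i => if i = i₀ then Polynomial.C (A i₀ 0) * (V - Polynomial.X * U) - U ^ 2
      else Polynomial.C (A i 0) * V - Polynomial.C (A i 1) * U)
    (fun i => if i = i₀ then 1 else Polynomial.C (A i 1) - Polynomial.C (A i 0) * Polynomial.X)
    ?_ ?_
  · intro h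
    refine hΔ ⟨?_, ?_, ?_⟩
    · simpa [U, V] using congrArg (Polynomial.coeff · 2) h
    · have := congrArg (Polynomial.coeff · 1) h
      simp [U, V] at this
      linear_combination -this
    · simpa [U, V] using congrArg (Polynomial.coeff · 0) h
  · intro i j hj
    by_cases hi : i = i₀
    · rw [hi, h2] at hj ⊢
      interval_cases j <;> simp [U, V] <;> ring
    · rw [h1 i hi] at hj ⊢
      interval_cases j <;> simp [hi, U, V] <;> ring

/-- When `p` lies in the span of the lines `⟨v i 0, v i 1⟩`, it lies on the chord joining
`∑ A i 0 • (v i 0 + t v i 1)` to a point of the ruling at infinity. -/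
lemma dimGE_secLocus_of_conic_coords_eq_zero (h0 : A i₀ 0 = 0) (h1' : A i₀ 1 = 0)
    (h2' : A i₀ 2 = 0) : dimGE (secLocus D.carrier p) 1 := by
  refine D.dimGE_secLocus_of_secant_family (one_le_of_eq_two_of_eq_one h2 h1) hp hA 0 1
    (fun i => if i = i₀ then 0 else Polynomial.C (A i 0))
    (fun i => if i = i₀ then 0 else Polynomial.C (A i 1) - Polynomial.C (A i 0) * Polynomial.X)
    (by simp) ?_
  intro i j hj
  by_cases hi : i = i₀
  · rw [hi, h2] at hj ⊢
    interval_cases j <;> simp [h0, h1', h2']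
  · rw [h1 i hi] at hj ⊢
    interval_cases j <;> simp [hi]

/-- In characteristic `2` all tangent lines of the conic pass through its strange point `v i₀ 1`;
when `p` projects to it, `p` lies on the tangent line of the scroll at every point of the curve
`t ↦ A i₀ 1 • w i₀ (1, t) + ∑ (A i 1 - t A i 0) • w i (1, t)`. -/
lemma dimGE_secLocus_of_conic_coords_eq_strange_point (h0 : A i₀ 0 = 0) (h2' : A i₀ 2 = 0)
    (hchar : 2 * A i₀ 1 = 0) (h1' : A i₀ 1 ≠ 0) : dimGE (secLocus D.carrier p) 1 := by
  set B : Fin n → K[X] := fun i => if i = i₀ then Polynomial.C (A i₀ 1)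
    else Polynomial.C (A i 1) - Polynomial.C (A i 0) * Polynomial.X
  refine D.dimGE_one_of_rulingPoint_mem_cone (one_le_of_eq_two_of_eq_one h2 h1) Set.infinite_univ B
    (fun t _ => D.rulingPoint_one_ne_zero (i := i₀) (by simpa [B] using h1') t) fun t _ => ?_
  refine D.rulingPoint_mem_cone_secLocus_of_tangent hp hA _ (fun i => if i = i₀ then 0 else A i 0)
    t fun i j hj => ?_
  by_cases hi : i = i₀
  · rw [hi, h2] at hj
    rw [hi]
    interval_cases j <;> simp [B, h0, h2', mul_eq_zero.1 hchar]
  · rw [h1 i hi] at hj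
    interval_cases j <;> simp [B, hi]

end ScrollData

end TypeOneTwo

theorem secLocus_dim_ge_one_general {K : Type*} [Field K] [IsAlgClosed K]
    (n : ℕ) (a : Fin n → ℕ)
    (ha : ∃ i₀ : Fin n, a i₀ = 2 ∧ ∀ i, i ≠ i₀ → a i = 1)
    (D : ScrollData K (2 * n) n a)
    (p : PS K (2 * n)) (hp : p ∉ D.carrier) :
    dimGE (secLocus D.carrier p) 1 := by
  obtain ⟨i₀, h2, h1⟩ := ha
  obtain ⟨A, hA⟩ := D.exists_comb_eq (sum_add_one_eq_of_eq_two_of_eq_one h2 h1) p.rep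
  by_cases hΔ : A i₀ 0 = 0 ∧ 2 * A i₀ 1 = 0 ∧ A i₀ 2 = 0
  · obtain ⟨h0, hchar, h2'⟩ := hΔ
    by_cases h1' : A i₀ 1 = 0
    · exact D.dimGE_secLocus_of_conic_coords_eq_zero h2 h1 hp hA h0 h1' h2'
    · exact D.dimGE_secLocus_of_conic_coords_eq_strange_point h2 h1 hp hA h0 h2' hchar h1'
  · exact D.dimGE_secLocus_of_conic_coords_nondegenerate h2 h1 hp hA hΔ

/-- Let `X̃ = S(1,…,1,2) ⊆ ℙ^{2n}` (`n-1` ones and one `2`, `n ≥ 2`) and let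
`p ∈ ℙ^{2n} \ X̃`.  Then `dim Σ_p(X̃) ≥ 1`. -/
theorem secLocus_dim_ge_one {K : Type*} [Field K] [IsAlgClosed K]
    (n : ℕ) (hn : 2 ≤ n) (a : Fin n → ℕ)
    (ha : ∃ i₀ : Fin n, a i₀ = 2 ∧ ∀ i, i ≠ i₀ → a i = 1)
    (D : ScrollData K (2 * n) n a)
    (p : PS K (2 * n)) (hp : p ∉ D.carrier) :
    dimGE (secLocus D.carrier p) 1 :=
  secLocus_dim_ge_one_general n a ha D p hp

end SecantLoci
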